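/- arXiv:math/0404030 — 5 statements merged into one kernel-verified Lean document; each statement's English description precedes it below -/
import Mathlib

section
/- For every pair (α,β) in the set {(0,6),(2,4),(3,3),(4,2),(6,0)}, the braid b¹_{α,β} = σ_1^{−1} σ_2^{−1} σ_1 · σ_1^{−1} σ_2^2 σ_1 · σ_2^{−β} · σ_1^{−1} σ_2 · σ_1^{−α} · σ_2^{−1} σ_1 · Δ_3^2 in the braid group B_3 is not quasipositive. -/
open FreeGroup in
/-- The braid relations on `n` generators. -/
def braidRels (n : ℕ) : Set (FreeGroup (Fin n)) :=
  {r | (∃ i j : Fin n, (i : ℕ) + 1 = (j : ℕ) ∧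
          r = of i * of j * of i * (of j * of i * of j)⁻¹) ∨
       (∃ i j : Fin n, (i : ℕ) + 2 ≤ (j : ℕ) ∧
          r = of i * of j * (of j * of i)⁻¹)}

/-- The braid group `B_{n+1}`, presented with `n` generators `σ_1, …, σ_n`
(so `Braid (m - 1)` is the braid group on `m` strands). -/
def Braid (n : ℕ) : Type := PresentedGroup (braidRels n)

instance (n : ℕ) : Group (Braid n) :=
  inferInstanceAs (Group (PresentedGroup (braidRels n)))

/-- The Artin generator `σ_{i+1}` of the braid group (indices start at `0`,
so `σ 0` is the generator usually written `σ_1`). -/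
def σ {n : ℕ} (i : Fin n) : Braid n := PresentedGroup.of i

/-- A braid is quasipositive if it can be written as a (possibly empty) product
of conjugates `w σ_1 w⁻¹` of the first Artin generator. -/
def Quasipositive {n : ℕ} [NeZero n] (b : Braid n) : Prop :=
  ∃ l : List (Braid n), b = (l.map fun w => w * σ 0 * w⁻¹).prod


/-- `σ_1` in the braid group `B_3`. -/
def σ₁ : Braid 2 := σ 0
/-- `σ_2` in the braid group `B_3`. -/
def σ₂ : Braid 2 := σ 1
/-- The Garside element `Δ_3 = σ_1 σ_2 σ_1` of `B_3`. -/
def Δ₃ : Braid 2 := σ₁ * σ₂ * σ₁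

-- auxiliary
abbrev SL2 := Matrix.SpecialLinearGroup (Fin 2) ℤ

def M1 : SL2 := ⟨!![1,1;0,1], by decide⟩
def M2 : SL2 := ⟨!![1,0;-1,1], by decide⟩

def Φ : Braid 2 →* SL2 :=
  PresentedGroup.toGroup (f := ![M1, M2]) (by
    rintro r (⟨i, j, hij, rfl⟩ | ⟨i, j, hij, rfl⟩)
    · have hi : i = 0 := Fin.ext (by have := j.isLt; omega)
      have hj : j = 1 := Fin.ext (by have := i.isLt; omega)
      subst hi hj
      simp only [map_mul, map_inv, FreeGroup.lift_apply_of, Matrix.cons_val_zero,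
        Matrix.cons_val_one, Matrix.head_cons]
      rw [mul_inv_eq_one]
      exact Subtype.ext (by decide)
    · exact absurd j.isLt (by omega))

def E : Braid 2 →* Multiplicative ℤ :=
  PresentedGroup.toGroup (f := fun _ => Multiplicative.ofAdd 1) (by
    rintro r (⟨i, j, hij, rfl⟩ | ⟨i, j, hij, rfl⟩) <;>
      simp only [map_mul, map_inv, FreeGroup.lift_apply_of] <;> decide)

@[simp] lemma Φσ₁ : Φ σ₁ = M1 := PresentedGroup.toGroup.of _
@[simp] lemma Φσ₂ : Φ σ₂ = M2 := PresentedGroup.toGroup.of _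
@[simp] lemma Eσ₁ : E σ₁ = Multiplicative.ofAdd 1 := PresentedGroup.toGroup.of _
@[simp] lemma Eσ₂ : E σ₂ = Multiplicative.ofAdd 1 := PresentedGroup.toGroup.of _

lemma E_prod (l : List (Braid 2)) :
    E ((l.map fun w => w * σ 0 * w⁻¹).prod) = Multiplicative.ofAdd (l.length : ℤ) := by
  induction l with
  | nil => simp
  | cons w l ih =>
    have hσ : E (σ 0) = Multiplicative.ofAdd 1 := Eσ₁
    simp only [List.map_cons, List.prod_cons, map_mul, map_inv, ih, hσ, List.length_cons]
    have hc : E w * Multiplicative.ofAdd 1 * (E w)⁻¹ = Multiplicative.ofAdd 1 := by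
      rw [mul_comm (E w) (Multiplicative.ofAdd 1), mul_inv_cancel_right]
    rw [hc, ← ofAdd_add]
    congr 1
    push_cast
    ring

lemma notqp (b : Braid 2) (t : ℤ) (ht : t ≠ 2)
    (hE : E b = Multiplicative.ofAdd 1)
    (hT : Matrix.trace ((Φ b : SL2) : Matrix (Fin 2) (Fin 2) ℤ) = t) :
    ¬ Quasipositive b := by
  rintro ⟨l, rfl⟩
  have hlen : l.length = 1 := by
    have := (E_prod l).symm.trans hE
    have h2 : (l.length : ℤ) = 1 := by exact_mod_cast Multiplicative.ofAdd.injective this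
    exact_mod_cast h2
  obtain ⟨w, rfl⟩ := List.length_eq_one_iff.mp hlen
  have hb : Φ ((([w].map fun w => w * σ 0 * w⁻¹)).prod) = Φ w * M1 * (Φ w)⁻¹ := by
    simp [map_mul, map_inv, show Φ (σ 0) = M1 from Φσ₁]
  apply ht
  rw [← hT, hb]
  have hco : ((Φ w * M1 * (Φ w)⁻¹ : SL2) : Matrix (Fin 2) (Fin 2) ℤ)
      = ((Φ w : SL2) : Matrix (Fin 2) (Fin 2) ℤ) * (M1 : Matrix (Fin 2) (Fin 2) ℤ)
        * (((Φ w)⁻¹ : SL2) : Matrix (Fin 2) (Fin 2) ℤ) := by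
    simp
  rw [hco, Matrix.trace_mul_comm]
  have hinv : (((Φ w)⁻¹ : SL2) : Matrix (Fin 2) (Fin 2) ℤ)
      * ((Φ w : SL2) : Matrix (Fin 2) (Fin 2) ℤ) = 1 := by
    rw [← Matrix.SpecialLinearGroup.coe_mul, inv_mul_cancel]
    rfl
  rw [← mul_assoc, hinv, one_mul]
  decide

def bb (α β : ℕ) : Braid 2 :=
  σ₁⁻¹ * σ₂⁻¹ * σ₁ * (σ₁⁻¹ * σ₂ ^ 2 * σ₁) * (σ₂ ^ β)⁻¹ *
    (σ₁⁻¹ * σ₂) * (σ₁ ^ α)⁻¹ * (σ₂⁻¹ * σ₁) * Δ₃ ^ 2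

theorem b1_not_quasipositive :
    ∀ α β : ℕ, (α, β) ∈ ({(0,6),(2,4),(3,3),(4,2),(6,0)} : Set (ℕ × ℕ)) →
      ¬ Quasipositive
        (σ₁⁻¹ * σ₂⁻¹ * σ₁ * (σ₁⁻¹ * σ₂ ^ 2 * σ₁) * (σ₂ ^ β)⁻¹ *
          (σ₁⁻¹ * σ₂) * (σ₁ ^ α)⁻¹ * (σ₂⁻¹ * σ₁) * Δ₃ ^ 2) := by
  intro α β h
  simp only [Set.mem_insert_iff, Set.mem_singleton_iff, Prod.mk.injEq] at h
  show ¬ Quasipositive (bb α β)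
  rcases h with ⟨rfl, rfl⟩ | ⟨rfl, rfl⟩ | ⟨rfl, rfl⟩ | ⟨rfl, rfl⟩ | ⟨rfl, rfl⟩
  · exact notqp _ (-8) (by decide)
      (by simp only [bb, Δ₃, map_mul, map_inv, map_pow, Eσ₁, Eσ₂]; decide)
      (by simp only [bb, Δ₃, map_mul, map_inv, map_pow, Φσ₁, Φσ₂]; decide)
  · exact notqp _ 8 (by decide)
      (by simp only [bb, Δ₃, map_mul, map_inv, map_pow, Eσ₁, Eσ₂]; decide)
      (by simp only [bb, Δ₃, map_mul, map_inv, map_pow, Φσ₁, Φσ₂]; decide)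
  · exact notqp _ 10 (by decide)
      (by simp only [bb, Δ₃, map_mul, map_inv, map_pow, Eσ₁, Eσ₂]; decide)
      (by simp only [bb, Δ₃, map_mul, map_inv, map_pow, Φσ₁, Φσ₂]; decide)
  · exact notqp _ 8 (by decide)
      (by simp only [bb, Δ₃, map_mul, map_inv, map_pow, Eσ₁, Eσ₂]; decide)
      (by simp only [bb, Δ₃, map_mul, map_inv, map_pow, Φσ₁, Φσ₂]; decide)
  · exact notqp _ (-8) (by decide)
      (by simp only [bb, Δ₃, map_mul, map_inv, map_pow, Eσ₁, Eσ₂]; decide)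
      (by simp only [bb, Δ₃, map_mul, map_inv, map_pow, Φσ₁, Φσ₂]; decide)
end

section
/- For every α in the set {0,2,3,4,6}, setting β = 6 − α, the braid b²_{α,β} = σ_1 σ_2^{−β} σ_1^{−1} σ_2 σ_1^{−α} Δ_3^2 in the braid group B_3 is not quasipositive. -/
lemma rels_eval {G : Type*} [Group G] (a b : G) (hab : a * b * a = b * a * b) :
    ∀ r ∈ braidRels 2,
      FreeGroup.lift (fun i : Fin 2 => if i = 0 then a else b) r = 1 := by
  rintro r (⟨i, j, hij, rfl⟩ | ⟨i, j, hij, rfl⟩)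
  · have hi : i = 0 := by omega
    have hj : j = 1 := by omega
    subst hi hj
    simp only [map_mul, map_inv, FreeGroup.lift_apply_of]
    norm_num
    rw [hab]
    group
  · have := j.isLt
    omega

def T : SL2 := ⟨!![1,1;0,1], by norm_num [Matrix.det_fin_two_of]⟩
def U : SL2 := ⟨!![1,0;-1,1], by norm_num [Matrix.det_fin_two_of]⟩

def φ : Braid 2 →* SL2 :=
  PresentedGroup.toGroup (rels_eval T U (Subtype.ext (by decide)))


lemma φσ₁ : φ σ₁ = T := by unfold φ σ₁ σ; exact PresentedGroup.toGroup.of _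
lemma φσ₂ : φ σ₂ = U := by unfold φ σ₂ σ; exact PresentedGroup.toGroup.of _
def e : Braid 2 →* Multiplicative ℤ :=
  PresentedGroup.toGroup (rels_eval (Multiplicative.ofAdd 1) (Multiplicative.ofAdd 1) rfl)

lemma eσ₁ : e σ₁ = Multiplicative.ofAdd 1 := by unfold e σ₁ σ; exact PresentedGroup.toGroup.of _
lemma eσ₂ : e σ₂ = Multiplicative.ofAdd 1 := by unfold e σ₂ σ; exact PresentedGroup.toGroup.of _

lemma e_prod (l : List (Braid 2)) :
    e (l.map fun w => w * σ 0 * w⁻¹).prod = Multiplicative.ofAdd (l.length : ℤ) := by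
  induction l with
  | nil => simp
  | cons w l ih =>
    simp only [List.map_cons, List.prod_cons, map_mul, map_inv, List.length_cons, ih]
    have h0 : e (σ 0) = Multiplicative.ofAdd 1 := eσ₁
    rw [h0, mul_comm (e w) (Multiplicative.ofAdd 1), mul_inv_cancel_right, ← ofAdd_add]
    congr 1
    push_cast
    ring

theorem b2_not_quasipositive :
    ∀ α : ℕ, α ∈ ({0,2,3,4,6} : Set ℕ) →
      ¬ Quasipositive
        (σ₁ * (σ₂ ^ (6 - α))⁻¹ * σ₁⁻¹ * σ₂ * (σ₁ ^ α)⁻¹ * Δ₃ ^ 2) := by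
  have tr2 : ∀ l : List (Braid 2), l.length = 1 →
      Matrix.trace ((φ ((l.map fun w => w * σ 0 * w⁻¹).prod)) :
        Matrix (Fin 2) (Fin 2) ℤ) = 2 := by
    intro l h1
    obtain ⟨w, rfl⟩ : ∃ w, l = [w] := by
      match l, h1 with | [w], _ => exact ⟨w, rfl⟩
    simp only [List.map_cons, List.map_nil, List.prod_cons, List.prod_nil, mul_one, map_mul,
      map_inv]
    have hT : φ (σ 0) = T := φσ₁
    rw [hT]
    calc Matrix.trace ((φ w * T * (φ w)⁻¹ : SL2) : Matrix (Fin 2) (Fin 2) ℤ)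
        = Matrix.trace (((φ w * T : SL2) : Matrix (Fin 2) (Fin 2) ℤ)
            * (((φ w)⁻¹ : SL2) : Matrix (Fin 2) (Fin 2) ℤ)) := by
          rw [← Matrix.SpecialLinearGroup.coe_mul]
      _ = Matrix.trace ((((φ w)⁻¹ : SL2) : Matrix (Fin 2) (Fin 2) ℤ)
            * ((φ w * T : SL2) : Matrix (Fin 2) (Fin 2) ℤ)) := Matrix.trace_mul_comm _ _
      _ = Matrix.trace (((φ w)⁻¹ * (φ w * T) : SL2) : Matrix (Fin 2) (Fin 2) ℤ) := by
          rw [← Matrix.SpecialLinearGroup.coe_mul]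
      _ = 2 := by rw [inv_mul_cancel_left]; decide
  intro α hα
  simp only [Set.mem_insert_iff, Set.mem_singleton_iff] at hα
  rintro ⟨l, hl⟩
  have hlen := e_prod l
  rw [← hl] at hlen
  have htr' := tr2 l
  rw [← hl] at htr'
  rcases hα with rfl | rfl | rfl | rfl | rfl <;>
  · simp only [Δ₃, map_mul, map_inv, map_pow, eσ₁, eσ₂, ← ofAdd_add, ← ofAdd_neg,
      ← ofAdd_nsmul] at hlen
    have hlen2 := Multiplicative.ofAdd.injective hlen
    have h1 : l.length = 1 := by simp only [nsmul_eq_mul] at hlen2; push_cast at hlen2; omega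
    have htr := htr' h1
    simp only [Δ₃, map_mul, map_inv, map_pow, φσ₁, φσ₂] at htr
    revert htr
    decide
end

section
/- The braid b⁵ = σ_1^{−4} σ_2^{2} σ_1^{−3} σ_2^{−1} σ_1 Δ_3^2 in the braid group B_3 is not quasipositive. -/
/-!
The exponent sum of a product of `k` conjugates of `σ_1` is `k`, and `e(b⁵) = 1`, so a quasipositive
`b⁵` would be a single conjugate of `σ_1`. Under the homomorphism `B₃ → SL(2, ℤ)` sending
`σ_1 ↦ [[1, 1], [0, 1]]` and `σ_2 ↦ [[1, 0], [-1, 1]]`, the image of `σ_1` has trace `2` while the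
image of `b⁵` is `[[22, 53], [-5, -12]]`, of trace `10`; conjugate matrices have equal traces.
-/

open Matrix MatrixGroups

namespace Braid

variable {n : ℕ}

lemma lift_braidRels_eq_one {G : Type*} [Group G] {f : Fin n → G}
    (hbraid : ∀ i j : Fin n, (i : ℕ) + 1 = j → f i * f j * f i = f j * f i * f j)
    (hcomm : ∀ i j : Fin n, (i : ℕ) + 2 ≤ j → f i * f j = f j * f i) :
    ∀ r ∈ braidRels n, FreeGroup.lift f r = 1 := by
  rintro r (⟨i, j, hij, rfl⟩ | ⟨i, j, hij, rfl⟩) <;>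
    simp only [map_mul, map_inv, FreeGroup.lift_apply_of, mul_inv_eq_one]
  exacts [hbraid i j hij, hcomm i j hij]

noncomputable def expSum (n : ℕ) : Braid n →* Multiplicative ℤ :=
  PresentedGroup.toGroup (f := fun _ => Multiplicative.ofAdd 1)
    (lift_braidRels_eq_one (fun _ _ _ => rfl) (fun _ _ _ => rfl))

@[simp]
lemma expSum_σ (i : Fin n) : expSum n (σ i) = Multiplicative.ofAdd 1 :=
  PresentedGroup.toGroup.of _

lemma expSum_conj (w b : Braid n) : expSum n (w * b * w⁻¹) = expSum n b := by
  rw [map_mul, map_mul, map_inv, mul_right_comm, mul_inv_cancel, one_mul]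

lemma expSum_prod_conj_σ [NeZero n] (l : List (Braid n)) :
    expSum n (l.map fun w => w * σ 0 * w⁻¹).prod = Multiplicative.ofAdd (l.length : ℤ) := by
  induction l with
  | nil => rfl
  | cons w l ih =>
    rw [List.map_cons, List.prod_cons, map_mul, ih, expSum_conj, expSum_σ, List.length_cons]
    push_cast
    rw [add_comm, ofAdd_add]

/-- The reduced Burau representation of `B₃` at `t = -1`. -/
def toSL2 : Braid 2 →* SL(2, ℤ) :=
  PresentedGroup.toGroup (f := ![ModularGroup.T, ⟨!![1, 0; -1, 1], by simp [det_fin_two_of]⟩])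
    (lift_braidRels_eq_one (by decide) (by decide))

lemma toSL2_σ₁ : toSL2 σ₁ = ModularGroup.T := PresentedGroup.toGroup.of _

lemma toSL2_σ₂ : toSL2 σ₂ = ⟨!![1, 0; -1, 1], by simp [det_fin_two_of]⟩ :=
  PresentedGroup.toGroup.of _

end Braid

lemma Quasipositive.isConj_σ_of_expSum_eq_one {n : ℕ} [NeZero n] {b : Braid n}
    (hb : Quasipositive b) (he : Braid.expSum n b = Multiplicative.ofAdd 1) : IsConj (σ 0) b := by
  obtain ⟨l, rfl⟩ := hb
  rw [Braid.expSum_prod_conj_σ, Multiplicative.ofAdd.injective.eq_iff, Nat.cast_eq_one,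
    List.length_eq_one_iff] at he
  obtain ⟨w, rfl⟩ := he
  exact isConj_iff.mpr ⟨w, by simp⟩

lemma Matrix.SpecialLinearGroup.trace_eq_of_isConj {m R : Type*} [Fintype m] [DecidableEq m]
    [CommRing R] {g h : SpecialLinearGroup m R} (hgh : IsConj g h) :
    trace (g : Matrix m m R) = trace (h : Matrix m m R) := by
  obtain ⟨c, rfl⟩ := isConj_iff.mp hgh
  rw [coe_mul, coe_mul, trace_mul_cycle, ← coe_mul, inv_mul_cancel, coe_one, one_mul]

theorem b5_not_quasipositive :
    ¬ Quasipositive ((σ₁ ^ 4)⁻¹ * σ₂ ^ 2 * (σ₁ ^ 3)⁻¹ * σ₂⁻¹ * σ₁ * Δ₃ ^ 2) := by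
  intro hqp
  have hconj : IsConj σ₁ _ := hqp.isConj_σ_of_expSum_eq_one (by simp [σ₁, σ₂, Δ₃]; decide)
  have htr := SpecialLinearGroup.trace_eq_of_isConj (Braid.toSL2.map_isConj hconj)
  simp only [Δ₃, map_mul, map_inv, map_pow, Braid.toSL2_σ₁, Braid.toSL2_σ₂] at htr
  exact absurd htr (by decide)
end

section
/- None of the three braids b¹⁴ = σ_1^{−1} σ_2^{−1} σ_1^{−2} σ_2^{−1} σ_1 σ_2^{−4} σ_1^{−1} Δ_3^3, b¹⁵ = σ_1^{−1} σ_2^{−1} σ_1^{−1} σ_2^{−5} σ_1^{−1} Δ_3^3, and b¹⁶ = σ_1^{−1} σ_2^{−1} σ_1^{−1} σ_2^{−1} σ_1 σ_2^{−4} σ_1^{−1} σ_2^{−1} Δ_3^3 in the braid group B_3 is quasipositive; equivalently (since each has exponent sum 0), none of them equals the identity element of B_3. -/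
-- aux
abbrev BM5 := Matrix (Fin 2) (Fin 2) (ZMod 5)

def bu1 : BM5ˣ := ⟨!![1,1;0,1], !![1,-1;0,1], by decide, by decide⟩
def bu2 : BM5ˣ := ⟨!![1,0;-1,1], !![1,0;1,1], by decide, by decide⟩

lemma braid_rel_aux : ∀ r ∈ braidRels 2,
    FreeGroup.lift (fun i : Fin 2 => if i = 0 then bu1 else bu2) r = 1 := by
  rintro r (⟨i, j, hij, rfl⟩ | ⟨i, j, hij, rfl⟩)
  · have hi : i = 0 := by omega
    have hj : j = 1 := by omega
    subst hi hj
    simp only [map_mul, map_inv, FreeGroup.lift_apply_of]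
    rw [mul_inv_eq_one]
    apply Units.ext; decide
  · exfalso; omega

def ρ : Braid 2 →* BM5ˣ := PresentedGroup.toGroup braid_rel_aux

lemma ρσ₁ : ρ σ₁ = bu1 := PresentedGroup.toGroup.of braid_rel_aux
lemma ρσ₂ : ρ σ₂ = bu2 := PresentedGroup.toGroup.of braid_rel_aux

lemma eps_aux : ∀ r ∈ braidRels 2,
    FreeGroup.lift (fun _ : Fin 2 => Multiplicative.ofAdd (1 : ℤ)) r = 1 := by
  rintro r (⟨i, j, hij, rfl⟩ | ⟨i, j, hij, rfl⟩) <;>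
    simp only [map_mul, map_inv, FreeGroup.lift_apply_of] <;> group

def ε : Braid 2 →* Multiplicative ℤ := PresentedGroup.toGroup eps_aux

lemma εσ₁ : ε σ₁ = Multiplicative.ofAdd (1 : ℤ) := PresentedGroup.toGroup.of eps_aux
lemma εσ₂ : ε σ₂ = Multiplicative.ofAdd (1 : ℤ) := PresentedGroup.toGroup.of eps_aux

lemma quasi_eps {b : Braid 2} (h : Quasipositive b) (he : ε b = 1) : b = 1 := by
  obtain ⟨l, rfl⟩ := h
  have : ε (l.map fun w => w * σ 0 * w⁻¹).prod
      = Multiplicative.ofAdd (l.length : ℤ) := by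
    rw [map_list_prod]
    have : (l.map fun w => w * σ 0 * w⁻¹).map ε
        = List.replicate l.length (Multiplicative.ofAdd (1 : ℤ)) := by
      rw [List.map_map]
      rw [List.eq_replicate_iff]
      constructor
      · simp
      · intro x hx
        simp only [List.mem_map, Function.comp] at hx
        obtain ⟨w, _, rfl⟩ := hx
        simp [map_mul, map_inv]
        show ε (σ 0) = Multiplicative.ofAdd (1:ℤ)
        exact εσ₁
      
    rw [this, List.prod_replicate, ← ofAdd_nsmul]
    norm_num
  rw [he] at this
  have hl : l.length = 0 := by
    have := Multiplicative.ofAdd.injective this.symm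
    omega
  rw [List.length_eq_zero_iff] at hl
  subst hl; simp

theorem b14_b15_b16_not_quasipositive :
    (¬ Quasipositive
        (σ₁⁻¹ * σ₂⁻¹ * (σ₁ ^ 2)⁻¹ * σ₂⁻¹ * σ₁ * (σ₂ ^ 4)⁻¹ * σ₁⁻¹ * Δ₃ ^ 3) ∧
      ¬ Quasipositive
        (σ₁⁻¹ * σ₂⁻¹ * σ₁⁻¹ * (σ₂ ^ 5)⁻¹ * σ₁⁻¹ * Δ₃ ^ 3) ∧
      ¬ Quasipositive
        (σ₁⁻¹ * σ₂⁻¹ * σ₁⁻¹ * σ₂⁻¹ * σ₁ * (σ₂ ^ 4)⁻¹ * σ₁⁻¹ * σ₂⁻¹ * Δ₃ ^ 3)) ∧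
    (σ₁⁻¹ * σ₂⁻¹ * (σ₁ ^ 2)⁻¹ * σ₂⁻¹ * σ₁ * (σ₂ ^ 4)⁻¹ * σ₁⁻¹ * Δ₃ ^ 3 ≠ 1 ∧
      σ₁⁻¹ * σ₂⁻¹ * σ₁⁻¹ * (σ₂ ^ 5)⁻¹ * σ₁⁻¹ * Δ₃ ^ 3 ≠ 1 ∧
      σ₁⁻¹ * σ₂⁻¹ * σ₁⁻¹ * σ₂⁻¹ * σ₁ * (σ₂ ^ 4)⁻¹ * σ₁⁻¹ * σ₂⁻¹ * Δ₃ ^ 3 ≠ 1) := by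
  have hne : (σ₁⁻¹ * σ₂⁻¹ * (σ₁ ^ 2)⁻¹ * σ₂⁻¹ * σ₁ * (σ₂ ^ 4)⁻¹ * σ₁⁻¹ * Δ₃ ^ 3 ≠ 1 ∧
      σ₁⁻¹ * σ₂⁻¹ * σ₁⁻¹ * (σ₂ ^ 5)⁻¹ * σ₁⁻¹ * Δ₃ ^ 3 ≠ 1 ∧
      σ₁⁻¹ * σ₂⁻¹ * σ₁⁻¹ * σ₂⁻¹ * σ₁ * (σ₂ ^ 4)⁻¹ * σ₁⁻¹ * σ₂⁻¹ * Δ₃ ^ 3 ≠ 1) := by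
    refine ⟨fun h => ?_, fun h => ?_, fun h => ?_⟩ <;>
    · have := congrArg ρ h
      rw [Units.ext_iff] at this
      simp only [Δ₃, map_mul, map_inv, map_pow, map_one, ρσ₁, ρσ₂] at this
      revert this
      decide
  have heps : (ε (σ₁⁻¹ * σ₂⁻¹ * (σ₁ ^ 2)⁻¹ * σ₂⁻¹ * σ₁ * (σ₂ ^ 4)⁻¹ * σ₁⁻¹ * Δ₃ ^ 3) = 1 ∧
      ε (σ₁⁻¹ * σ₂⁻¹ * σ₁⁻¹ * (σ₂ ^ 5)⁻¹ * σ₁⁻¹ * Δ₃ ^ 3) = 1 ∧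
      ε (σ₁⁻¹ * σ₂⁻¹ * σ₁⁻¹ * σ₂⁻¹ * σ₁ * (σ₂ ^ 4)⁻¹ * σ₁⁻¹ * σ₂⁻¹ * Δ₃ ^ 3) = 1) := by
    refine ⟨?_, ?_, ?_⟩ <;>
    · simp only [Δ₃, map_mul, map_inv, map_pow, εσ₁, εσ₂]
      group
      rfl
  exact ⟨⟨fun h => hne.1 (quasi_eps h heps.1),
          fun h => hne.2.1 (quasi_eps h heps.2.1),
          fun h => hne.2.2 (quasi_eps h heps.2.2)⟩, hne⟩
end

section
/- Let G be the simple graph whose vertex set is {1,2,3,4,5,6} × {+,−}, in which a vertex (i,+) is adjacent to a vertex (j,−) if and only if the pair (i,j) or the pair (j,i) belongs to E = {(1,2),(1,6),(1,4),(2,3),(2,5),(3,6),(3,4),(4,5),(5,6)}, and there are no other edges. Then G has exactly two connected components, namely {(1,+),(3,+),(5,+),(2,−),(4,−),(6,−)} and {(2,+),(4,+),(6,+),(1,−),(3,−),(5,−)}. -/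
/-- The set `E` of pairs, where the pair `(i, j)` indicates that the vertex `(i, +)`
is adjacent to the vertex `(j, −)`. -/
def gluingPairs : Set (ℕ × ℕ) :=
  {(1,2), (1,6), (1,4), (2,3), (2,5), (3,6), (3,4), (4,5), (5,6)}

/-- The gluing graph `G` on the vertex set `{1,…,6} × {+,−}`: vertices are encoded as
pairs `(v, s) : Fin 6 × Bool`, where `v : Fin 6` stands for the label `v + 1 ∈ {1,…,6}`
and `s = true` stands for `+`, `s = false` for `−`.  A vertex `(i, +)` is adjacent to a
vertex `(j, −)` if and only if `(i, j) ∈ E` or `(j, i) ∈ E`, and there are no other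
edges. -/
def gluingGraph : SimpleGraph (Fin 6 × Bool) where
  Adj v w := v.2 ≠ w.2 ∧
    (((v.1 : ℕ) + 1, (w.1 : ℕ) + 1) ∈ gluingPairs ∨
      ((w.1 : ℕ) + 1, (v.1 : ℕ) + 1) ∈ gluingPairs)
  symm := ⟨fun v w h => ⟨Ne.symm h.1, h.2.symm⟩⟩
  loopless := ⟨fun v h => h.1 rfl⟩

/-- The first claimed connected component `{(1,+), (3,+), (5,+), (2,−), (4,−), (6,−)}`. -/
def component₁ : Set (Fin 6 × Bool) :=
  {p | ((p.1 : ℕ) + 1, p.2) ∈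
    ({(1, true), (3, true), (5, true), (2, false), (4, false), (6, false)} :
      Set (ℕ × Bool))}

/-- The second claimed connected component `{(2,+), (4,+), (6,+), (1,−), (3,−), (5,−)}`. -/
def component₂ : Set (Fin 6 × Bool) :=
  {p | ((p.1 : ℕ) + 1, p.2) ∈
    ({(2, true), (4, true), (6, true), (1, false), (3, false), (5, false)} :
      Set (ℕ × Bool))}

/-!
Every pair in `E` joins an odd label to an even one, and every edge of `G` joins a `+` vertex
to a `−` vertex, so "the label is odd iff the sign is `+`" is invariant along edges; this is
membership in the first set, and the second set is its complement. Conversely each set is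
connected, since it is dominated by an edge: every vertex of the first set is adjacent to
`(1,+)` or `(2,−)`, and every vertex of the second to `(2,+)` or `(1,−)`.
-/

namespace SimpleGraph

variable {V : Type*} {G : SimpleGraph V}

theorem Reachable.mem_iff_of_forall_adj {S : Set V} (hS : ∀ v w, G.Adj v w → (v ∈ S ↔ w ∈ S))
    {u v : V} (h : G.Reachable u v) : u ∈ S ↔ v ∈ S := by
  obtain ⟨p⟩ := h
  induction p with
  | nil => rfl
  | cons hadj _ ih => exact (hS _ _ hadj).trans ih

theorem Adj.reachable_of_forall_adj_or_adj {S : Set V} {a b : V} (hab : G.Adj a b)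
    (hS : ∀ v ∈ S, G.Adj v a ∨ G.Adj v b) {v w : V} (hv : v ∈ S) (hw : w ∈ S) :
    G.Reachable v w := by
  have reachable_a : ∀ x ∈ S, G.Reachable x a := fun x hx =>
    (hS x hx).elim Adj.reachable fun hxb => hxb.reachable.trans hab.symm.reachable
  exact (reachable_a v hv).trans (reachable_a w hw).symm

end SimpleGraph

instance : DecidablePred (· ∈ gluingPairs) := fun _ => by unfold gluingPairs; infer_instance

instance : DecidableRel gluingGraph.Adj := fun _ _ => by unfold gluingGraph; infer_instance

instance : DecidablePred (· ∈ component₁) := fun _ => by unfold component₁; infer_instance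

instance : DecidablePred (· ∈ component₂) := fun _ => by unfold component₂; infer_instance

theorem even_iff_not_even_of_mem_gluingPairs {i j : ℕ} (h : (i, j) ∈ gluingPairs) :
    Even i ↔ ¬Even j := by
  simp only [gluingPairs, Set.mem_insert_iff, Set.mem_singleton_iff, Prod.mk.injEq] at h
  rcases h with ⟨rfl, rfl⟩ | ⟨rfl, rfl⟩ | ⟨rfl, rfl⟩ | ⟨rfl, rfl⟩ | ⟨rfl, rfl⟩ | ⟨rfl, rfl⟩ |
    ⟨rfl, rfl⟩ | ⟨rfl, rfl⟩ | ⟨rfl, rfl⟩ <;> decide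

theorem mem_component₁_iff (p : Fin 6 × Bool) : p ∈ component₁ ↔ (Even (p.1 : ℕ) ↔ p.2) := by
  revert p; decide

theorem compl_component₁ : component₁ᶜ = component₂ := by
  ext p; revert p; decide

theorem mem_component₁_iff_of_gluingGraph_adj {v w : Fin 6 × Bool} (h : gluingGraph.Adj v w) :
    v ∈ component₁ ↔ w ∈ component₁ := by
  obtain ⟨hsign, hpair⟩ := h
  have hparity : Even (v.1 : ℕ) ↔ ¬Even (w.1 : ℕ) := by
    have hlabels := hpair.elim even_iff_not_even_of_mem_gluingPairs fun hwv => by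
      have := even_iff_not_even_of_mem_gluingPairs hwv; tauto
    rw [Nat.even_add_one, Nat.even_add_one] at hlabels
    tauto
  rw [mem_component₁_iff, mem_component₁_iff]
  cases hv : v.2 <;> cases hw : w.2 <;> simp_all

theorem gluingGraph_adj_or_adj_of_mem_component₁ :
    ∀ v ∈ component₁, gluingGraph.Adj v (0, true) ∨ gluingGraph.Adj v (1, false) := by
  decide

theorem gluingGraph_adj_or_adj_of_mem_component₂ :
    ∀ v ∈ component₂, gluingGraph.Adj v (1, true) ∨ gluingGraph.Adj v (0, false) := by
  decide

/-- The gluing graph has exactly two connected components, namely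
`{(1,+),(3,+),(5,+),(2,−),(4,−),(6,−)}` and `{(2,+),(4,+),(6,+),(1,−),(3,−),(5,−)}`:
these two sets are disjoint, cover all vertices, and two vertices are joined by a path
in `G` if and only if they lie in the same one of the two sets. -/
theorem gluingGraph_two_components :
    component₁ ∪ component₂ = Set.univ ∧
    component₁ ∩ component₂ = ∅ ∧
    ∀ v w : Fin 6 × Bool,
      gluingGraph.Reachable v w ↔
        ((v ∈ component₁ ∧ w ∈ component₁) ∨ (v ∈ component₂ ∧ w ∈ component₂)) := by
  refine ⟨by rw [← compl_component₁, Set.union_compl_self],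
    by rw [← compl_component₁, Set.inter_compl_self], fun v w => ⟨fun h => ?_, ?_⟩⟩
  · have hv_iff_hw := h.mem_iff_of_forall_adj fun _ _ => mem_component₁_iff_of_gluingGraph_adj
    rw [← compl_component₁, Set.mem_compl_iff, Set.mem_compl_iff]
    tauto
  · rintro (⟨hv, hw⟩ | ⟨hv, hw⟩)
    · exact SimpleGraph.Adj.reachable_of_forall_adj_or_adj (by decide)
        gluingGraph_adj_or_adj_of_mem_component₁ hv hw
    · exact SimpleGraph.Adj.reachable_of_forall_adj_or_adj (by decide)
        gluingGraph_adj_or_adj_of_mem_component₂ hv hw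
end
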